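/- Let R be an NP-ring. If in a short exact sequence 0 → A → B → C → 0 of R-modules both B and C are strongly φ-w-flat, then A is strongly φ-w-flat. -/

import Mathlib

open CategoryTheory

noncomputable section

def IsGV (R : Type) [CommRing R] (J : Ideal R) : Prop :=
  J.FG ∧ Function.Bijective (fun r : R => (r • J.subtype : J →ₗ[R] R))

def IsGVTorsion (R : Type) [CommRing R] (M : Type) [AddCommGroup M] [Module R M] : Prop :=
  ∀ x : M, ∃ J : Ideal R, IsGV R J ∧ ∀ j ∈ J, j • x = 0

def IsPhiTorsion (R : Type) [CommRing R] (M : Type) [AddCommGroup M] [Module R M] : Prop :=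
  ∀ x : M, ∃ I : Ideal R, ¬ I ≤ nilradical R ∧ ∀ a ∈ I, a • x = 0

/-- `Tor_n^R(T, M)` as an object of `ModuleCat R`. -/
def TorMod (R : Type) [CommRing R] (n : ℕ) (T M : Type) [AddCommGroup T] [Module R T]
    [AddCommGroup M] [Module R M] : ModuleCat R :=
  ((Tor (ModuleCat R) n).obj (ModuleCat.of R T)).obj (ModuleCat.of R M)

/-- `M` is strongly φ-w-flat if `Tor_n^R(T, M)` is GV-torsion for every
φ-torsion module `T` and every `n ≥ 1`. -/
def IsStronglyPhiWFlat (R : Type) [CommRing R] (M : Type) [AddCommGroup M] [Module R M] : Prop :=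
  ∀ (T : Type) (_ : AddCommGroup T) (_ : Module R T), IsPhiTorsion R T →
    ∀ n : ℕ, 1 ≤ n → IsGVTorsion R (TorMod R n T M)

/-!
GV ideals are closed under products, so GV-torsion is closed under extensions: if `X → Y → Z`
is exact with `X` and `Z` GV-torsion, a GV ideal `J` kills the image of `y` in `Z`, each of the
finitely many generators of `J` moves `y` into the image of `X`, and the product of `J` with GV
ideals killing those images kills `y`.

Applied to the segment `Tor_{n+1}(T, C) → Tor_n(T, A) → Tor_n(T, B)` of the long exact Tor
sequence this gives the theorem. That segment comes from the horseshoe lemma: covering `A` and `C`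
by free modules and lifting the cover of `C` through `B → C` covers `B` by their direct sum, and
iterating on the kernels yields a degreewise split short exact sequence of projective resolutions,
which stays exact after tensoring with `T`.
-/

section GV

variable {R : Type} [CommRing R] {J K : Ideal R}

lemma IsGV.eq_zero_of_forall_mul_eq_zero (hJ : IsGV R J) {r : R} (h : ∀ j ∈ J, r * j = 0) :
    r = 0 :=
  hJ.2.1 (LinearMap.ext fun j => by simpa using h j j.2)

lemma IsGV.exists_eq_mul (hJ : IsGV R J) (φ : J →ₗ[R] R) : ∃ r : R, ∀ j : J, φ j = r * j := by
  obtain ⟨r, rfl⟩ := hJ.2.2 φ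
  exact ⟨r, fun j => rfl⟩

lemma IsGV.of_forall (hJ : J.FG) (h_inj : ∀ r : R, (∀ j ∈ J, r * j = 0) → r = 0)
    (h_surj : ∀ φ : J →ₗ[R] R, ∃ r : R, ∀ j : J, φ j = r * j) : IsGV R J := by
  refine ⟨hJ, fun r s hrs => sub_eq_zero.1 (h_inj _ fun j hj => ?_), fun φ => ?_⟩
  · simpa [sub_mul, sub_eq_zero] using LinearMap.congr_fun hrs ⟨j, hj⟩
  · obtain ⟨r, hr⟩ := h_surj φ
    exact ⟨r, LinearMap.ext fun j => (hr j).symm⟩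

lemma isGV_top : IsGV R ⊤ :=
  .of_forall ⟨{1}, by simp⟩ (fun r h => by simpa using h 1 trivial)
    fun φ => ⟨φ ⟨1, trivial⟩, fun j => by
      rw [mul_comm, ← smul_eq_mul, ← map_smul]
      congr 1
      ext
      simp⟩

lemma IsGV.mul (hJ : IsGV R J) (hK : IsGV R K) : IsGV R (J * K) := by
  refine .of_forall (hJ.1.mul hK.1) (fun r hr => ?_) fun φ => ?_
  · refine hK.eq_zero_of_forall_mul_eq_zero fun k hk =>
      hJ.eq_zero_of_forall_mul_eq_zero fun j hj => ?_
    rw [mul_assoc, mul_comm k]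
    exact hr _ (Ideal.mul_mem_mul hj hk)
  · let eJ : R ≃ₗ[R] (J →ₗ[R] R) :=
      .ofBijective (LinearMap.toSpanSingleton R _ J.subtype) hJ.2
    let Ψ : K →ₗ[R] J →ₗ[R] R := (TensorProduct.curry (φ ∘ₗ Submodule.mulMap' J K)).flip
    obtain ⟨s, hs⟩ := hK.exists_eq_mul (eJ.symm.toLinearMap ∘ₗ Ψ)
    have h_tmul (j : J) (k : K) : φ (Submodule.mulMap' J K (j ⊗ₜ k)) = s * (j * k) := by
      have : Ψ k = eJ (s * k) := eJ.symm_apply_eq.1 (hs k)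
      calc φ (Submodule.mulMap' J K (j ⊗ₜ k)) = Ψ k j := rfl
        _ = s * k * j := by rw [this]; rfl
        _ = s * (j * k) := by ring
    suffices φ ∘ₗ Submodule.mulMap' J K = (s • (J * K).subtype) ∘ₗ Submodule.mulMap' J K by
      refine ⟨s, fun x => ?_⟩
      obtain ⟨t, rfl⟩ := Submodule.mulMap'_surjective J K x
      exact LinearMap.congr_fun this t
    exact TensorProduct.ext' fun j k => h_tmul j k

lemma isGV_prod {ι : Type*} (s : Finset ι) (J : ι → Ideal R) (h : ∀ i ∈ s, IsGV R (J i)) :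
    IsGV R (∏ i ∈ s, J i) :=
  Finset.prod_induction _ (IsGV R) (fun _ _ => IsGV.mul)
    (by rw [Ideal.one_eq_top]; exact isGV_top) h

lemma IsGVTorsion.of_exact {X Y Z : Type} [AddCommGroup X] [Module R X] [AddCommGroup Y]
    [Module R Y] [AddCommGroup Z] [Module R Z] {f : X →ₗ[R] Y} {g : Y →ₗ[R] Z}
    (hfg : Function.Exact f g) (hX : IsGVTorsion R X) (hZ : IsGVTorsion R Z) :
    IsGVTorsion R Y := by
  intro y
  obtain ⟨J, hJ, hJy⟩ := hZ (g y)
  obtain ⟨s, hs⟩ := hJ.1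
  have h_range (a : R) (ha : a ∈ J) : ∃ x, f x = a • y :=
    (hfg (a • y)).1 (by rw [map_smul, hJy a ha])
  choose! x hx using h_range
  choose K hK hKx using fun a => hX (x a)
  set L := ∏ a ∈ s, K a
  have hL_gen (a : R) (ha : a ∈ s) (l : R) (hl : l ∈ L) : l • a • y = 0 := by
    have haJ : a ∈ J := hs ▸ Ideal.subset_span ha
    rw [← hx a haJ, ← map_smul, hKx a l (Ideal.prod_le_inf.trans (Finset.inf_le ha) hl), map_zero]
  have hL (j : R) (hj : j ∈ J) (l : R) (hl : l ∈ L) : l • j • y = 0 := by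
    suffices J ≤ (Submodule.torsionBySet R Y L).comap (LinearMap.toSpanSingleton R Y y) from
      (Submodule.mem_torsionBySet_iff _ _).1 (this hj) ⟨l, hl⟩
    rw [← hs, Ideal.span_le]
    exact fun a ha => (Submodule.mem_torsionBySet_iff _ _).2 fun l => hL_gen a ha l l.2
  refine ⟨J * L, hJ.mul (isGV_prod s K fun a _ => hK a), fun m hm => ?_⟩
  have hJL : J * L ≤ LinearMap.ker (LinearMap.toSpanSingleton R Y y) :=
    Submodule.mul_le.2 fun j hj l hl => by simp [mul_comm j, mul_smul, hL j hj l hl]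
  simpa using hJL hm

end GV

section Resolution

variable {R : Type} [CommRing R]

def projectiveResolutionOfExact {M : ModuleCat R} (P : ℕ → ModuleCat R) [∀ n, Projective (P n)]
    (d : ∀ n, P (n + 1) ⟶ P n) (ε : P 0 ⟶ M) (hε : Function.Surjective ε)
    (h_exact₀ : Function.Exact (d 0) ε) (h_exact : ∀ n, Function.Exact (d (n + 1)) (d n)) :
    ProjectiveResolution M where
  complex := ChainComplex.of P d fun n => ModuleCat.hom_ext (h_exact n).linearMap_comp_eq_zero
  π := (ChainComplex.toSingle₀Equiv _ _).symm
    ⟨ε, by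
      rw [show (ChainComplex.of P d _).d 1 0 = d 0 from ChainComplex.of_d P d 0]
      exact ModuleCat.hom_ext h_exact₀.linearMap_comp_eq_zero⟩
  quasiIso := ⟨fun n => by
    cases n with
    | zero =>
      rw [ChainComplex.quasiIsoAt₀_iff, ShortComplex.quasiIso_iff_of_zeros' _ rfl rfl rfl]
      exact ⟨(ShortComplex.ShortExact.moduleCat_exact_iff_function_exact _).2 h_exact₀,
        (ModuleCat.epi_iff_surjective _).2 hε⟩
    | succ n =>
      rw [quasiIsoAt_iff_exactAt' _ _ (ChainComplex.exactAt_succ_single_obj _ _),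
        HomologicalComplex.exactAt_iff' _ (n + 1 + 1) (n + 1) n (by simp) (by simp),
        ShortComplex.ShortExact.moduleCat_exact_iff_function_exact]
      change Function.Exact (ChainComplex.of.d P d (n + 1 + 1) (n + 1))
        (ChainComplex.of.d P d (n + 1) n)
      rw [ChainComplex.of_d, ChainComplex.of_d]
      exact h_exact n⟩

variable (P K : ℕ → ModuleCat R) [∀ n, Projective (P n)] (ε : ∀ n, P n ⟶ K n)
  (hε : ∀ n, Function.Surjective (ε n)) (ι : ∀ n, K (n + 1) ⟶ P n)
  (hι : ∀ n, Function.Injective (ι n)) (hιε : ∀ n, Function.Exact (ι n) (ε n))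

def projectiveResolutionOfSyzygies : ProjectiveResolution (K 0) :=
  projectiveResolutionOfExact P (fun n => ε (n + 1) ≫ ι n) (ε 0) (hε 0)
    ((hε 1).comp_exact_iff_exact.2 (hιε 0))
    fun n => (hε (n + 2)).comp_exact_iff_exact.2 ((hι n).comp_exact_iff_exact.2 (hιε (n + 1)))

lemma projectiveResolutionOfSyzygies_d_apply (n : ℕ) (x : P (n + 1)) :
    (projectiveResolutionOfSyzygies P K ε hε ι hι hιε).complex.d (n + 1) n x =
      ι n (ε (n + 1) x) := by
  change ChainComplex.of.d P (fun n => ε (n + 1) ≫ ι n) (n + 1) n x = _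
  rw [ChainComplex.of_d]
  rfl

end Resolution

namespace Horseshoe

open ModuleCat

variable {R : Type} [CommRing R] (S : ShortComplex (ModuleCat R))

def cover₁ : (S.X₁ →₀ R) →ₗ[R] S.X₁ := Finsupp.linearCombination R id

def cover₃ : (S.X₃ →₀ R) →ₗ[R] S.X₃ := Finsupp.linearCombination R id

/-- `Function.invFun S.g` is a section of `S.g` as soon as `S.g` is surjective (`g_cover₂`);
using it rather than `Function.surjInv` keeps `cover₂` free of hypotheses. -/
def cover₂ : (S.X₁ →₀ R) × (S.X₃ →₀ R) →ₗ[R] S.X₂ :=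
  (S.f.hom ∘ₗ cover₁ S).coprod (Finsupp.linearCombination R (Function.invFun S.g))

variable {S}

lemma cover₂_inl (x : S.X₁ →₀ R) : cover₂ S (x, 0) = S.f (cover₁ S x) := by
  simp [cover₂]

lemma g_cover₂ (hS : S.ShortExact) (w : (S.X₁ →₀ R) × (S.X₃ →₀ R)) :
    S.g (cover₂ S w) = cover₃ S w.2 := by
  have h_lift : S.g.hom ∘ₗ Finsupp.linearCombination R (Function.invFun S.g) = cover₃ S := by
    ext c
    simp [cover₃, Function.invFun_eq (hS.moduleCat_surjective_g c)]
  simpa [cover₂] using LinearMap.congr_fun h_lift w.2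

lemma surjective_cover₁ : Function.Surjective (cover₁ S) :=
  Finsupp.linearCombination_id_surjective R S.X₁

lemma surjective_cover₃ : Function.Surjective (cover₃ S) :=
  Finsupp.linearCombination_id_surjective R S.X₃

lemma exists_cover₂_eq (hS : S.ShortExact) {b : S.X₂} {z : S.X₃ →₀ R}
    (hz : S.g b = cover₃ S z) : ∃ x, cover₂ S (x, z) = b := by
  have h_ker : S.g (b - cover₂ S (0, z)) = 0 := by
    rw [map_sub, g_cover₂ hS, hz, sub_self]
  obtain ⟨a, ha⟩ :=
    ((ShortComplex.ShortExact.moduleCat_exact_iff_function_exact S).1 hS.exact _).1 h_ker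
  obtain ⟨x, rfl⟩ := surjective_cover₁ a
  refine ⟨x, ?_⟩
  rw [← add_zero x, ← zero_add z, ← Prod.mk_add_mk, map_add, cover₂_inl, ha, sub_add_cancel]

lemma surjective_cover₂ (hS : S.ShortExact) : Function.Surjective (cover₂ S) := fun b =>
  let ⟨z, hz⟩ := surjective_cover₃ (S.g b)
  let ⟨x, hx⟩ := exists_cover₂_eq hS hz.symm
  ⟨(x, z), hx⟩

def syzygies (hS : S.ShortExact) : ShortComplex (ModuleCat R) where
  X₁ := of R (LinearMap.ker (cover₁ S))
  X₂ := of R (LinearMap.ker (cover₂ S))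
  X₃ := of R (LinearMap.ker (cover₃ S))
  f := ofHom <| (LinearMap.inl R _ _).restrict (p := LinearMap.ker (cover₁ S))
    (q := LinearMap.ker (cover₂ S)) fun x hx => by simp_all [cover₂_inl]
  g := ofHom <| (LinearMap.snd R _ _).restrict (p := LinearMap.ker (cover₂ S))
    (q := LinearMap.ker (cover₃ S)) fun w hw => by simp_all [← g_cover₂ hS]
  zero := ModuleCat.hom_ext <| LinearMap.ext fun _ => Subtype.ext rfl

variable (hS : S.ShortExact)

lemma shortExact_syzygies : (syzygies hS).ShortExact := by
  refine ModuleCat.shortComplex_shortExact _ (fun w => ⟨fun hw => ?_, ?_⟩)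
    (fun x y hxy => Subtype.ext (congrArg (Prod.fst ∘ Subtype.val) hxy)) fun ⟨z, hz⟩ => ?_
  · obtain ⟨⟨x, z⟩, hxz⟩ := w
    obtain rfl : z = 0 := congrArg Subtype.val hw
    have hx : cover₁ S x = 0 :=
      hS.moduleCat_injective_f (by rw [← cover₂_inl, map_zero]; exact hxz)
    exact ⟨⟨x, hx⟩, rfl⟩
  · rintro ⟨x', rfl⟩
    rfl
  · obtain ⟨x, hx⟩ := exists_cover₂_eq hS (b := 0) (by rw [map_zero]; exact hz.symm)
    exact ⟨⟨(x, z), hx⟩, rfl⟩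

def tower : ℕ → {T : ShortComplex (ModuleCat R) // T.ShortExact}
  | 0 => ⟨S, hS⟩
  | n + 1 => ⟨syzygies (tower n).2, shortExact_syzygies (tower n).2⟩

def resolution₁ : ProjectiveResolution S.X₁ :=
  projectiveResolutionOfSyzygies (fun n => of R ((tower hS n).1.X₁ →₀ R))
    (fun n => (tower hS n).1.X₁) (fun _ => ofHom (cover₁ _)) (fun _ => surjective_cover₁)
    (fun _ => ofHom (LinearMap.ker (cover₁ _)).subtype) (fun _ => Subtype.val_injective)
    fun _ => LinearMap.exact_subtype_ker_map _

def resolution₂ : ProjectiveResolution S.X₂ :=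
  projectiveResolutionOfSyzygies
    (fun n => of R (((tower hS n).1.X₁ →₀ R) × ((tower hS n).1.X₃ →₀ R)))
    (fun n => (tower hS n).1.X₂) (fun _ => ofHom (cover₂ _))
    (fun n => surjective_cover₂ (tower hS n).2)
    (fun _ => ofHom (LinearMap.ker (cover₂ _)).subtype) (fun _ => Subtype.val_injective)
    fun _ => LinearMap.exact_subtype_ker_map _

def resolution₃ : ProjectiveResolution S.X₃ :=
  projectiveResolutionOfSyzygies (fun n => of R ((tower hS n).1.X₃ →₀ R))
    (fun n => (tower hS n).1.X₃) (fun _ => ofHom (cover₃ _)) (fun _ => surjective_cover₃)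
    (fun _ => ofHom (LinearMap.ker (cover₃ _)).subtype) (fun _ => Subtype.val_injective)
    fun _ => LinearMap.exact_subtype_ker_map _

lemma resolution₁_d_apply (n : ℕ) (x : (tower hS (n + 1)).1.X₁ →₀ R) :
    (resolution₁ hS).complex.d (n + 1) n x = (cover₁ (tower hS (n + 1)).1 x).1 :=
  projectiveResolutionOfSyzygies_d_apply _ _ _ _ _ _ _ n _

lemma resolution₂_d_apply (n : ℕ)
    (w : ((tower hS (n + 1)).1.X₁ →₀ R) × ((tower hS (n + 1)).1.X₃ →₀ R)) :
    (resolution₂ hS).complex.d (n + 1) n w = (cover₂ (tower hS (n + 1)).1 w).1 :=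
  projectiveResolutionOfSyzygies_d_apply _ _ _ _ _ _ _ n _

lemma resolution₃_d_apply (n : ℕ) (z : (tower hS (n + 1)).1.X₃ →₀ R) :
    (resolution₃ hS).complex.d (n + 1) n z = (cover₃ (tower hS (n + 1)).1 z).1 :=
  projectiveResolutionOfSyzygies_d_apply _ _ _ _ _ _ _ n _

def resolutionInl : (resolution₁ hS).complex ⟶ (resolution₂ hS).complex :=
  ChainComplex.ofHom (fun n => ofHom (LinearMap.inl R _ _)) fun n => by
    ext (x : (tower hS (n + 1)).1.X₁ →₀ R)
    change (resolution₂ hS).complex.d (n + 1) n (x, 0) =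
      ((resolution₁ hS).complex.d (n + 1) n x, 0)
    rw [resolution₂_d_apply, resolution₁_d_apply, cover₂_inl]
    rfl

def resolutionSnd : (resolution₂ hS).complex ⟶ (resolution₃ hS).complex :=
  ChainComplex.ofHom (fun n => ofHom (LinearMap.snd R _ _)) fun n => by
    ext (w : ((tower hS (n + 1)).1.X₁ →₀ R) × ((tower hS (n + 1)).1.X₃ →₀ R))
    change (resolution₃ hS).complex.d (n + 1) n w.2 =
      ((resolution₂ hS).complex.d (n + 1) n w).2
    rw [resolution₂_d_apply, resolution₃_d_apply, ← g_cover₂ (tower hS (n + 1)).2]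
    rfl

def resolutionShortComplex : ShortComplex (ChainComplex (ModuleCat R) ℕ) :=
  ShortComplex.mk (resolutionInl hS) (resolutionSnd hS) (by ext; rfl)

def resolutionShortComplexSplitting (n : ℕ) :
    ((resolutionShortComplex hS).map (HomologicalComplex.eval _ _ n)).Splitting where
  r := ofHom (LinearMap.fst R _ _)
  s := ofHom (LinearMap.inr R _ _)
  f_r := by ext; rfl
  s_g := by ext; rfl
  id := by
    ext w : 2
    exact Prod.fst_add_snd w

lemma shortExact_map_resolutionShortComplex (F : ModuleCat R ⥤ ModuleCat R) [F.Additive] :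
    ((resolutionShortComplex hS).map (F.mapHomologicalComplex _)).ShortExact :=
  HomologicalComplex.shortExact_of_degreewise_shortExact _
    fun n => ((resolutionShortComplexSplitting hS n).map F).shortExact

end Horseshoe

open Horseshoe in
theorem exists_exact_torMod {R : Type} [CommRing R] {S : ShortComplex (ModuleCat R)}
    (hS : S.ShortExact) (T : Type) [AddCommGroup T] [Module R T] (n : ℕ) :
    ∃ (δ : TorMod R (n + 1) T S.X₃ ⟶ TorMod R n T S.X₁)
      (i : TorMod R n T S.X₁ ⟶ TorMod R n T S.X₂), Function.Exact δ i := by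
  let F := (MonoidalCategory.tensoringLeft (ModuleCat R)).obj (ModuleCat.of R T)
  let S' := (resolutionShortComplex hS).map (F.mapHomologicalComplex _)
  have hS' : S'.ShortExact := shortExact_map_resolutionShortComplex hS F
  let e₁ : TorMod R n T S.X₁ ≅ S'.X₁.homology n := (resolution₁ hS).isoLeftDerivedObj F n
  let e₂ : TorMod R n T S.X₂ ≅ S'.X₂.homology n := (resolution₂ hS).isoLeftDerivedObj F n
  let e₃ : TorMod R (n + 1) T S.X₃ ≅ S'.X₃.homology (n + 1) :=
    (resolution₃ hS).isoLeftDerivedObj F (n + 1)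
  let δ := e₃.hom ≫ hS'.δ (n + 1) n rfl ≫ e₁.inv
  let i := e₁.hom ≫ HomologicalComplex.homologyMap S'.f n ≫ e₂.inv
  have h_zero : δ ≫ i = 0 := by
    simp [δ, i, reassoc_of% hS'.δ_comp (n + 1) n rfl]
  have h := (ShortComplex.exact_iff_of_iso (S₂ := ShortComplex.mk δ i h_zero)
    (ShortComplex.isoMk e₃.symm e₁.symm e₂.symm (by simp [δ]) (by simp [i]))).1
    (hS'.homology_exact₁ (n + 1) n rfl)
  exact ⟨δ, i, (ShortComplex.ShortExact.moduleCat_exact_iff_function_exact _).1 h⟩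

theorem stronglyPhiWFlat_of_ses_left_general (R : Type) [CommRing R]
    (A B C : Type) [AddCommGroup A] [Module R A] [AddCommGroup B] [Module R B]
    [AddCommGroup C] [Module R C]
    (f : A →ₗ[R] B) (g : B →ₗ[R] C) (hf : Function.Injective f)
    (hg : Function.Surjective g) (hfg : LinearMap.range f = LinearMap.ker g)
    (hB : IsStronglyPhiWFlat R B) (hC : IsStronglyPhiWFlat R C) :
    IsStronglyPhiWFlat R A := by
  intro T _ _ hT n hn
  have hfg' : Function.Exact f g := LinearMap.exact_iff.2 hfg.symm
  have hS := ModuleCat.shortComplex_shortExact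
    (ShortComplex.moduleCatMk f g hfg'.linearMap_comp_eq_zero) hfg' hf hg
  obtain ⟨δ, i, hδi⟩ := exists_exact_torMod hS T n
  exact IsGVTorsion.of_exact (f := δ.hom) (g := i.hom) hδi
    (hC T _ _ hT (n + 1) (by omega)) (hB T _ _ hT n hn)

theorem stronglyPhiWFlat_of_ses_left (R : Type) [CommRing R] (hNP : (nilradical R).IsPrime)
    (A B C : Type) [AddCommGroup A] [Module R A] [AddCommGroup B] [Module R B]
    [AddCommGroup C] [Module R C]
    (f : A →ₗ[R] B) (g : B →ₗ[R] C) (hf : Function.Injective f)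
    (hg : Function.Surjective g) (hfg : LinearMap.range f = LinearMap.ker g)
    (hB : IsStronglyPhiWFlat R B) (hC : IsStronglyPhiWFlat R C) :
    IsStronglyPhiWFlat R A :=
  stronglyPhiWFlat_of_ses_left_general R A B C f g hf hg hfg hB hC
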